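/- arXiv:2306.00930 — 2 statements merged into one kernel-verified Lean document; each statement's English description precedes it below -/
import Mathlib

section
/- Let $0<\gamma<1$ and $R>0$. For every positive measurable function $f$ on $(0,R)$, $\int_0^R \left(\int_0^r f(t)\,dt\right)^2 r\,dr \le C(\gamma,R)^2 \int_0^R f(r)^2 r^{1-2\gamma}\,dr$, where $C(\gamma,R) \le R^{1+\gamma}\,\gamma^{(\gamma-1)/2}/(\gamma+1)^{(\gamma+1)/2}$. -/
/-!
Cauchy–Schwarz against the weight `t ^ (1 - 2γ)` bounds `(∫₀ʳ f) ^ 2` by `r ^ (2γ) / (2γ)` times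
the weighted energy of `f` on `(0, r) ⊆ (0, R)`. Integrating against `r dr` gives the constant
`C ^ 2 = R ^ (2γ + 2) / (4γ(γ + 1))`, and the stated bound on `C` reduces to
`((γ + 1) / γ) ^ γ ≤ e < 4`.
-/

open MeasureTheory Set
open scoped ENNReal

section
variable {α : Type*} [MeasurableSpace α] {μ : Measure α}

theorem sq_lintegral_mul_le {f g : α → ℝ≥0∞} (hf : AEMeasurable f μ) (hg : AEMeasurable g μ) :
    (∫⁻ x, f x * g x ∂μ) ^ 2 ≤ (∫⁻ x, f x ^ 2 ∂μ) * ∫⁻ x, g x ^ 2 ∂μ := by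
  have holder := ENNReal.lintegral_mul_le_Lp_mul_Lq μ Real.HolderConjugate.two_two hf hg
  simp only [ENNReal.rpow_two, Pi.mul_apply] at holder
  calc (∫⁻ x, f x * g x ∂μ) ^ 2
      ≤ ((∫⁻ x, f x ^ 2 ∂μ) ^ (1 / 2 : ℝ) * (∫⁻ x, g x ^ 2 ∂μ) ^ (1 / 2 : ℝ)) ^ 2 := by
        gcongr
    _ = (∫⁻ x, f x ^ 2 ∂μ) * ∫⁻ x, g x ^ 2 ∂μ := by
        rw [mul_pow, ← ENNReal.rpow_two, ← ENNReal.rpow_two, ← ENNReal.rpow_mul,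
          ← ENNReal.rpow_mul]
        norm_num

theorem sq_lintegral_le_mul_lintegral_inv {f w : α → ℝ≥0∞} (hf : AEMeasurable f μ)
    (hw : AEMeasurable w μ) (hw0 : ∀ᵐ x ∂μ, w x ≠ 0) (hwt : ∀ᵐ x ∂μ, w x ≠ ∞) :
    (∫⁻ x, f x ∂μ) ^ 2 ≤ (∫⁻ x, f x ^ 2 * w x ∂μ) * ∫⁻ x, (w x)⁻¹ ∂μ := by
  set s : α → ℝ≥0∞ := fun x ↦ w x ^ (1 / 2 : ℝ)
  have hs_sq : ∀ x, s x ^ 2 = w x := fun x ↦ by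
    simp only [s, ← ENNReal.rpow_two, ← ENNReal.rpow_mul]; norm_num
  have hf_eq : ∀ᵐ x ∂μ, f x = f x * s x * (s x)⁻¹ := by
    filter_upwards [hw0, hwt] with x h0 ht
    rw [mul_assoc, ENNReal.mul_inv_cancel (by simp [s, h0]) (by simp [s, ht]), mul_one]
  have hs : AEMeasurable s μ := hw.pow_const _
  calc (∫⁻ x, f x ∂μ) ^ 2 = (∫⁻ x, f x * s x * (s x)⁻¹ ∂μ) ^ 2 := by rw [lintegral_congr_ae hf_eq]
    _ ≤ (∫⁻ x, (f x * s x) ^ 2 ∂μ) * ∫⁻ x, (s x)⁻¹ ^ 2 ∂μ :=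
        sq_lintegral_mul_le (hf.mul hs) hs.inv
    _ = (∫⁻ x, f x ^ 2 * w x ∂μ) * ∫⁻ x, (w x)⁻¹ ∂μ := by
        simp only [mul_pow, ← ENNReal.inv_pow, hs_sq]

end

theorem lintegral_Ioo_rpow {e : ℝ} (he : -1 < e) {r : ℝ} (hr : 0 ≤ r) :
    ∫⁻ t in Ioo 0 r, ENNReal.ofReal (t ^ e) = ENNReal.ofReal (r ^ (e + 1) / (e + 1)) := by
  rw [setLIntegral_congr Ioo_ae_eq_Ioc, ← ofReal_integral_eq_lintegral_ofReal,
    ← intervalIntegral.integral_of_le hr, integral_rpow (Or.inl he),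
    Real.zero_rpow (by linarith), sub_zero]
  · exact (intervalIntegral.intervalIntegrable_rpow' he).1
  · filter_upwards [ae_restrict_mem measurableSet_Ioc] with t ht
    exact Real.rpow_nonneg ht.1.le e

theorem sq_lintegral_Ioo_le {γ : ℝ} (hγ : 0 < γ) {r : ℝ} (hr : 0 ≤ r) {f : ℝ → ℝ≥0∞}
    (hf : Measurable f) :
    (∫⁻ t in Ioo 0 r, f t) ^ 2 ≤
      (∫⁻ t in Ioo 0 r, f t ^ 2 * ENNReal.ofReal (t ^ (1 - 2 * γ))) *
        ENNReal.ofReal (r ^ (2 * γ) / (2 * γ)) := by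
  have hw_inv : ∫⁻ t in Ioo 0 r, (ENNReal.ofReal (t ^ (1 - 2 * γ)))⁻¹ =
      ENNReal.ofReal (r ^ (2 * γ) / (2 * γ)) := by
    have h := lintegral_Ioo_rpow (e := -(1 - 2 * γ)) (by linarith) hr
    rw [show -(1 - 2 * γ) + 1 = 2 * γ by ring] at h
    rw [← h]
    refine setLIntegral_congr_fun measurableSet_Ioo fun t ht ↦ ?_
    rw [← ENNReal.ofReal_inv_of_pos (Real.rpow_pos_of_pos ht.1 _), ← Real.rpow_neg ht.1.le]
  rw [← hw_inv]
  refine sq_lintegral_le_mul_lintegral_inv hf.aemeasurable (by fun_prop) ?_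
    (ae_of_all _ fun _ ↦ ENNReal.ofReal_ne_top)
  filter_upwards [ae_restrict_mem measurableSet_Ioo] with t ht
  exact (ENNReal.ofReal_pos.2 (Real.rpow_pos_of_pos ht.1 _)).ne'

theorem lintegral_Ioo_sq_lintegral_mul_le {γ : ℝ} (hγ : 0 < γ) {R : ℝ} (hR : 0 ≤ R)
    {f : ℝ → ℝ≥0∞} (hf : Measurable f) :
    ∫⁻ r in Ioo 0 R, (∫⁻ t in Ioo 0 r, f t) ^ 2 * ENNReal.ofReal r ≤
      ENNReal.ofReal (R ^ (2 * γ + 2) / (4 * γ * (γ + 1))) *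
        ∫⁻ r in Ioo 0 R, f r ^ 2 * ENNReal.ofReal (r ^ (1 - 2 * γ)) := by
  set K := ∫⁻ r in Ioo 0 R, f r ^ 2 * ENNReal.ofReal (r ^ (1 - 2 * γ))
  have hpointwise : ∀ r ∈ Ioo 0 R, (∫⁻ t in Ioo 0 r, f t) ^ 2 * ENNReal.ofReal r ≤
      ENNReal.ofReal (1 / (2 * γ)) * K * ENNReal.ofReal (r ^ (2 * γ + 1)) := fun r hr ↦
    calc (∫⁻ t in Ioo 0 r, f t) ^ 2 * ENNReal.ofReal r
        ≤ K * ENNReal.ofReal (r ^ (2 * γ) / (2 * γ)) * ENNReal.ofReal r := by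
          gcongr
          refine (sq_lintegral_Ioo_le hγ hr.1.le hf).trans ?_
          gcongr
          exact lintegral_mono_set (Ioo_subset_Ioo_right hr.2.le)
      _ = ENNReal.ofReal (1 / (2 * γ)) * K * ENNReal.ofReal (r ^ (2 * γ + 1)) := by
          rw [mul_assoc, ← ENNReal.ofReal_mul (by have := hr.1.le; positivity),
            Real.rpow_add_one hr.1.ne', mul_comm _ K, mul_assoc,
            ← ENNReal.ofReal_mul (by positivity)]
          ring_nf
  calc ∫⁻ r in Ioo 0 R, (∫⁻ t in Ioo 0 r, f t) ^ 2 * ENNReal.ofReal r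
      ≤ ∫⁻ r in Ioo 0 R, ENNReal.ofReal (1 / (2 * γ)) * K * ENNReal.ofReal (r ^ (2 * γ + 1)) :=
        setLIntegral_mono (by fun_prop) hpointwise
    _ = ENNReal.ofReal (R ^ (2 * γ + 2) / (4 * γ * (γ + 1))) * K := by
        rw [lintegral_const_mul _ (by fun_prop), lintegral_Ioo_rpow (by linarith) hR,
          mul_right_comm, ← ENNReal.ofReal_mul (by positivity)]
        congr 2
        rw [show 2 * γ + 1 + 1 = 2 * γ + 2 by ring]
        field_simp
        ring

theorem add_one_div_self_rpow_self_le_exp_one {γ : ℝ} (hγ : 0 < γ) :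
    ((γ + 1) / γ) ^ γ ≤ Real.exp 1 :=
  calc ((γ + 1) / γ) ^ γ = (γ⁻¹ + 1) ^ γ := by rw [add_div, div_self hγ.ne', one_div, add_comm]
    _ ≤ Real.exp γ⁻¹ ^ γ := by gcongr; exact Real.add_one_le_exp _
    _ = Real.exp 1 := by rw [← Real.exp_mul, inv_mul_cancel₀ hγ.ne']

theorem inv_four_mul_mul_add_one_le {γ : ℝ} (hγ : 0 < γ) :
    (4 * γ * (γ + 1))⁻¹ ≤ γ ^ (γ - 1) / (γ + 1) ^ (γ + 1) := by
  have hγ1 : 0 < γ + 1 := by linarith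
  have h4 : ((γ + 1) / γ) ^ γ ≤ 4 :=
    (add_one_div_self_rpow_self_le_exp_one hγ).trans (by linarith [Real.exp_one_lt_d9])
  have hrhs : γ ^ (γ - 1) / (γ + 1) ^ (γ + 1) = (((γ + 1) / γ) ^ γ * γ * (γ + 1))⁻¹ := by
    rw [Real.rpow_sub_one hγ.ne', Real.rpow_add_one hγ1.ne', Real.div_rpow hγ1.le hγ.le]
    field_simp
  rw [hrhs]
  gcongr

theorem stmt_0_general (γ R : ℝ) (hγ0 : 0 < γ) (hR : 0 < R) :
    ∃ C : ℝ, 0 ≤ C ∧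
      C ≤ R ^ (1 + γ) * γ ^ ((γ - 1) / 2) / (γ + 1) ^ ((γ + 1) / 2) ∧
      ∀ f : ℝ → ℝ≥0∞, Measurable f →
        ∫⁻ r in Set.Ioo (0 : ℝ) R, (∫⁻ t in Set.Ioo (0 : ℝ) r, f t) ^ 2
            * ENNReal.ofReal r ≤
          ENNReal.ofReal (C ^ 2) *
            ∫⁻ r in Set.Ioo (0 : ℝ) R, (f r) ^ 2 * ENNReal.ofReal (r ^ (1 - 2 * γ)) := by
  refine ⟨√(R ^ (2 * γ + 2) / (4 * γ * (γ + 1))), Real.sqrt_nonneg _, ?_, fun f hf ↦ ?_⟩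
  · rw [Real.sqrt_le_left (by positivity), div_pow, mul_pow, ← Real.rpow_mul_natCast hR.le,
      ← Real.rpow_mul_natCast hγ0.le, ← Real.rpow_mul_natCast (by positivity), div_eq_mul_inv,
      mul_div_assoc]
    push_cast
    rw [show (1 + γ) * 2 = 2 * γ + 2 by ring, show (γ - 1) / 2 * 2 = γ - 1 by ring,
      show (γ + 1) / 2 * 2 = γ + 1 by ring]
    gcongr
    exact inv_four_mul_mul_add_one_le hγ0
  · rw [Real.sq_sqrt (by positivity)]
    exact lintegral_Ioo_sq_lintegral_mul_le hγ0 hR.le hf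

/-- Weighted Hardy inequality with `p = q = 2`, weights `ω(t) = t`, `ν(t) = t^{1-2γ}`:
for `0 < γ < 1` and `R > 0`, there is a constant
`C(γ,R) ≤ R^{1+γ} γ^{(γ-1)/2} / (γ+1)^{(γ+1)/2}` such that for every positive
measurable `f` on `(0,R)`,
`∫_0^R (∫_0^r f)^2 r dr ≤ C(γ,R)^2 ∫_0^R f(r)^2 r^{1-2γ} dr`. -/
theorem stmt_0 (γ R : ℝ) (hγ0 : 0 < γ) (hγ1 : γ < 1) (hR : 0 < R) :
    ∃ C : ℝ, 0 ≤ C ∧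
      C ≤ R ^ (1 + γ) * γ ^ ((γ - 1) / 2) / (γ + 1) ^ ((γ + 1) / 2) ∧
      ∀ f : ℝ → ℝ≥0∞, Measurable f →
        ∫⁻ r in Set.Ioo (0 : ℝ) R, (∫⁻ t in Set.Ioo (0 : ℝ) r, f t) ^ 2
            * ENNReal.ofReal r ≤
          ENNReal.ofReal (C ^ 2) *
            ∫⁻ r in Set.Ioo (0 : ℝ) R, (f r) ^ 2 * ENNReal.ofReal (r ^ (1 - 2 * γ)) :=
  stmt_0_general γ R hγ0 hR
end

section
/- Let $E\subset\mathbb{R}^n$, $x\in E$, $R>0$, and consider a Whitney decomposition of $\mathbb{R}^n\setminus E$ into dyadic cubes. For every $\varsigma>\dim_A(E)$ there exists a constant $C$ such that the number $W_k(B(x,R))$ of Whitney cubes of sidelength $2^{-k}$ contained in the ball $B(x,R)$ satisfies $W_k(B(x,R))\le C R^\varsigma 2^{k\varsigma}$, for all $k$ with $2^{-k}<R$. -/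
/-! Let `r = 2^{-k}`. Since `ς > dim_A E`, the set `E ∩ B(x, (4√n+2)R)` is covered by
`C (R/r)^ς` balls of radius `r`. By the upper Whitney bound, every cube of side `r` inside
`B(x,R)` lies within `(4√n+1) r` of a point of `E`, hence inside a ball of radius `(5√n+2) r`
about one of these centres. Cubes with disjoint interiors contain disjoint balls of radius
`r/2`, so by volume each such ball holds at most `(2(5√n+2))^n` of them. -/

open MeasureTheory Metric

/-- The Assouad dimension of a subset of `ℝⁿ`. -/
noncomputable def dimA {n : ℕ} (E : Set (EuclideanSpace ℝ (Fin n))) : ℝ :=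
  sInf {ς : ℝ | 0 ≤ ς ∧ ∃ C : ℝ, 0 < C ∧ ∀ x ∈ E, ∀ r R : ℝ, 0 < r → r < R →
    ∃ S : Finset (EuclideanSpace ℝ (Fin n)), (S.card : ℝ) ≤ C * (R / r) ^ ς ∧
      E ∩ ball x R ⊆ ⋃ y ∈ S, ball y r}

open Module

section FiniteDimensional

variable {V : Type*} [NormedAddCommGroup V] [NormedSpace ℝ V] [FiniteDimensional ℝ V]
  [MeasurableSpace V] [BorelSpace V] [Nontrivial V]

theorem card_le_of_pairwiseDisjoint_ball {ι : Type*} {F : Finset ι} {p : ι → V} {z : V}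
    {δ ρ : ℝ} (hδ : 0 < δ) (hρ : 0 ≤ ρ)
    (hdisj : (F : Set ι).PairwiseDisjoint fun i => ball (p i) δ)
    (hsub : ∀ i ∈ F, ball (p i) δ ⊆ ball z ρ) :
    (F.card : ℝ) ≤ (ρ / δ) ^ finrank ℝ V := by
  set μ : Measure V := Measure.addHaar
  have hunit₀ : μ (ball 0 1) ≠ 0 := (measure_ball_pos μ 0 one_pos).ne'
  have hunit : μ (ball 0 1) ≠ ⊤ := measure_ball_lt_top.ne
  have hvol : (F.card : ENNReal) * ENNReal.ofReal (δ ^ finrank ℝ V) * μ (ball 0 1) ≤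
      ENNReal.ofReal (ρ ^ finrank ℝ V) * μ (ball 0 1) :=
    calc (F.card : ENNReal) * ENNReal.ofReal (δ ^ finrank ℝ V) * μ (ball 0 1)
        = ∑ i ∈ F, μ (ball (p i) δ) := by
          simp [Measure.addHaar_ball μ _ hδ.le, mul_assoc]
      _ = μ (⋃ i ∈ F, ball (p i) δ) :=
          (measure_biUnion_finset hdisj fun _ _ => measurableSet_ball).symm
      _ ≤ μ (ball z ρ) := measure_mono (Set.iUnion₂_subset hsub)
      _ = ENNReal.ofReal (ρ ^ finrank ℝ V) * μ (ball 0 1) := Measure.addHaar_ball μ _ hρ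
  rw [ENNReal.mul_le_mul_iff_left hunit₀ hunit, ← ENNReal.ofReal_natCast,
    ← ENNReal.ofReal_mul (Nat.cast_nonneg _),
    ENNReal.ofReal_le_ofReal_iff (by positivity)] at hvol
  rw [div_pow, le_div_iff₀ (by positivity)]
  exact hvol

theorem card_le_of_separated_subset_ball {S : Finset V} {x : V} {r R : ℝ} (hr : 0 < r)
    (hR : 0 ≤ R) (hS : (S : Set V) ⊆ ball x R)
    (hsep : (S : Set V).Pairwise fun a b => r ≤ dist a b) :
    (S.card : ℝ) ≤ (2 * R / r + 1) ^ finrank ℝ V := by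
  have := card_le_of_pairwiseDisjoint_ball (p := id) (z := x) (half_pos hr)
    (by positivity : 0 ≤ R + r / 2)
    (fun a ha b hb hab => ball_disjoint_ball (show r / 2 + r / 2 ≤ dist a b by
      linarith [hsep ha hb hab]))
    (fun a ha => ball_subset_ball' (show r / 2 + dist a x ≤ R + r / 2 by
      linarith [mem_ball.mp (hS ha)]))
  convert this using 2
  field_simp

/-- A maximal `r`-separated subset of `ball x R` is an `r`-net of it. -/
theorem exists_finset_card_le_ball_subset_biUnion_ball (x : V) {r R : ℝ} (hr : 0 < r)
    (hR : 0 ≤ R) :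
    ∃ S : Finset V, (S.card : ℝ) ≤ (2 * R / r + 1) ^ finrank ℝ V ∧
      ball x R ⊆ ⋃ y ∈ S, ball y r := by
  classical
  set P : Set ℕ := {m | ∃ S : Finset V, (S : Set V) ⊆ ball x R ∧
    (S : Set V).Pairwise (fun a b => r ≤ dist a b) ∧ S.card = m}
  have hPbdd : BddAbove P := ⟨⌈(2 * R / r + 1) ^ finrank ℝ V⌉₊, by
    rintro _ ⟨S, hS, hsep, rfl⟩
    exact Nat.cast_le.mp ((card_le_of_separated_subset_ball hr hR hS hsep).trans
      (Nat.le_ceil _))⟩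
  obtain ⟨S, hS, hsep, hcard⟩ := Nat.sSup_mem (⟨0, ∅, by simp⟩ : P.Nonempty) hPbdd
  refine ⟨S, card_le_of_separated_subset_ball hr hR hS hsep, fun y hy => ?_⟩
  by_contra hy'
  simp only [Set.mem_iUnion, mem_ball, exists_prop, not_exists, not_and, not_lt] at hy'
  have hyS : y ∉ S := fun h => by simpa using (hy' y h).trans_lt' hr
  have hmem : S.card + 1 ∈ P := by
    refine ⟨insert y S, by simp [Set.insert_subset_iff, hy, hS], ?_,
      Finset.card_insert_of_notMem hyS⟩
    rw [Finset.coe_insert, Set.pairwise_insert]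
    exact ⟨hsep, fun b hb _ => ⟨hy' b hb, (hy' b hb).trans_eq (dist_comm _ _)⟩⟩
  have := le_csSup hPbdd hmem
  omega

end FiniteDimensional

theorem Set.finite_and_ncard_le_of_forall_finset_card_le {α : Type*} {A : Set α} {N : ℝ}
    (h : ∀ F : Finset α, (F : Set α) ⊆ A → (F.card : ℝ) ≤ N) :
    A.Finite ∧ (A.ncard : ℝ) ≤ N := by
  have hfin : A.Finite := by
    by_contra hinf
    obtain ⟨F, hFA, hFcard⟩ := Set.Infinite.exists_subset_card_eq hinf (⌊N⌋₊ + 1)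
    have := h F hFA
    rw [hFcard, Nat.cast_add_one] at this
    exact (Nat.lt_floor_add_one N).not_ge this
  refine ⟨hfin, ?_⟩
  rw [Set.ncard_eq_toFinset_card _ hfin]
  exact h hfin.toFinset (by simp)

theorem Metric.exists_dist_lt_of_sInf_infDist_lt {X : Type*} [PseudoMetricSpace X] {E Q : Set X}
    {t : ℝ} (hE : E.Nonempty) (hQ : Q.Nonempty) (h : sInf ((infDist · E) '' Q) < t) :
    ∃ y ∈ Q, ∃ e ∈ E, dist y e < t := by
  obtain ⟨_, ⟨y, hy, rfl⟩, hyt⟩ := exists_lt_of_csInf_lt (hQ.image _) h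
  exact ⟨y, hy, (infDist_lt_iff hE).mp hyt⟩

theorem exists_finset_card_le_ball_subset_biUnion_ball_euclidean {n : ℕ} (hn : 0 < n)
    (x : EuclideanSpace ℝ (Fin n)) {r R : ℝ} (hr : 0 < r) (hrR : r < R) :
    ∃ S : Finset (EuclideanSpace ℝ (Fin n)), (S.card : ℝ) ≤ 3 ^ n * (R / r) ^ (n : ℝ) ∧
      ball x R ⊆ ⋃ y ∈ S, ball y r := by
  have : Nontrivial (EuclideanSpace ℝ (Fin n)) :=
    Module.nontrivial_of_finrank_pos (by rwa [finrank_euclideanSpace_fin])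
  have hR : 0 ≤ R := (hr.trans hrR).le
  obtain ⟨S, hcard, hcover⟩ := exists_finset_card_le_ball_subset_biUnion_ball x hr hR
  refine ⟨S, hcard.trans ?_, hcover⟩
  rw [finrank_euclideanSpace_fin, Real.rpow_natCast, ← mul_pow]
  have : 1 ≤ R / r := (one_le_div hr).mpr hrR.le
  exact pow_le_pow_left₀ (by positivity) (by rw [mul_div_assoc]; linarith) _

/-- `sInf ∅ = 0`, so `dimA E < ς` only carries information because the defining set is
nonempty: it contains `n`. -/
theorem exists_cover_of_dimA_lt {n : ℕ} (hn : 0 < n) {E : Set (EuclideanSpace ℝ (Fin n))}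
    {ς : ℝ} (hς : dimA E < ς) :
    ∃ C : ℝ, 0 < C ∧ ∀ x ∈ E, ∀ r R : ℝ, 0 < r → r < R →
      ∃ S : Finset (EuclideanSpace ℝ (Fin n)), (S.card : ℝ) ≤ C * (R / r) ^ ς ∧
        E ∩ ball x R ⊆ ⋃ y ∈ S, ball y r := by
  refine (exists_lt_of_csInf_lt ?_ hς).elim fun s ⟨⟨_, C, hC, hcov⟩, hsς⟩ => ?_
  · exact ⟨n, n.cast_nonneg, 3 ^ n, by positivity, fun x _ r R hr hrR =>
      (exists_finset_card_le_ball_subset_biUnion_ball_euclidean hn x hr hrR).imp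
        fun _ hS => ⟨hS.1, Set.inter_subset_right.trans hS.2⟩⟩
  refine ⟨C, hC, fun x hx r R hr hrR => ?_⟩
  obtain ⟨S, hcard, hcover⟩ := hcov x hx r R hr hrR
  refine ⟨S, hcard.trans ?_, hcover⟩
  gcongr
  exact (one_le_div hr).mpr hrR.le

theorem div_two_zpow_neg_rpow {R : ℝ} (hR : 0 ≤ R) (k : ℤ) (ς : ℝ) :
    (R / 2 ^ (-k)) ^ ς = R ^ ς * 2 ^ ((k : ℝ) * ς) := by
  rw [Real.div_rpow hR (by positivity), ← Real.rpow_intCast, ← Real.rpow_mul zero_le_two,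
    div_eq_mul_inv, ← Real.rpow_neg zero_le_two]
  push_cast
  ring_nf

section Cubes

variable {n : ℕ}

def cube (a : EuclideanSpace ℝ (Fin n)) (s : ℝ) : Set (EuclideanSpace ℝ (Fin n)) :=
  {x | ∀ d, x d ∈ Set.Icc (a d) (a d + s)}

theorem self_mem_cube (a : EuclideanSpace ℝ (Fin n)) {s : ℝ} (hs : 0 ≤ s) : a ∈ cube a s :=
  fun _ => ⟨le_rfl, le_add_of_nonneg_right hs⟩

theorem dist_le_sqrt_mul_of_forall_abs_sub_le {x y : EuclideanSpace ℝ (Fin n)} {m : ℝ}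
    (hm : 0 ≤ m) (h : ∀ d, |x d - y d| ≤ m) : dist x y ≤ √n * m := by
  rw [EuclideanSpace.dist_eq, ← Real.sqrt_sq hm, ← Real.sqrt_mul n.cast_nonneg]
  gcongr
  calc ∑ d, dist (x d) (y d) ^ 2 ≤ ∑ _d : Fin n, m ^ 2 := by
        gcongr with d
        rw [Real.dist_eq]
        exact h d
    _ = n * m ^ 2 := by simp

theorem dist_le_of_mem_cube {a p q : EuclideanSpace ℝ (Fin n)} {s : ℝ} (hs : 0 ≤ s)
    (hp : p ∈ cube a s) (hq : q ∈ cube a s) : dist p q ≤ √n * s :=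
  dist_le_sqrt_mul_of_forall_abs_sub_le hs fun d => by
    obtain ⟨hp₁, hp₂⟩ := hp d
    obtain ⟨hq₁, hq₂⟩ := hq d
    rw [abs_le]
    constructor <;> linarith

theorem ball_subset_interior_cube (a : EuclideanSpace ℝ (Fin n)) (s : ℝ) :
    ball (a + WithLp.toLp 2 fun _ => s / 2) (s / 2) ⊆ interior (cube a s) := by
  refine interior_maximal (fun x hx d => ?_) isOpen_ball
  have := (PiLp.dist_apply_le x _ d).trans_lt (mem_ball.mp hx)
  rw [Real.dist_eq, abs_lt] at this
  simp only [PiLp.add_apply] at this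
  constructor <;> linarith

theorem exists_cube_subset_ball_of_sInf_infDist_lt {E : Set (EuclideanSpace ℝ (Fin n))}
    {T : Finset (EuclideanSpace ℝ (Fin n))} {a x : EuclideanSpace ℝ (Fin n)} {s t R : ℝ}
    (hs : 0 ≤ s) (hx : x ∈ E) (hax : cube a s ⊆ ball x R)
    (hdist : sInf ((infDist · E) '' cube a s) < t)
    (hT : E ∩ ball x (R + t) ⊆ ⋃ z ∈ T, ball z s) :
    ∃ z ∈ T, cube a s ⊆ ball z (√n * s + t + s) := by
  obtain ⟨y, hy, e, he, hye⟩ :=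
    exists_dist_lt_of_sInf_infDist_lt ⟨x, hx⟩ ⟨a, self_mem_cube a hs⟩ hdist
  have hex : e ∈ ball x (R + t) := by
    rw [mem_ball]
    linarith [dist_triangle e y x, dist_comm y e, mem_ball.mp (hax hy)]
  obtain ⟨z, hzT, hez⟩ := Set.mem_iUnion₂.mp (hT ⟨he, hex⟩)
  refine ⟨z, hzT, fun p hp => ?_⟩
  calc dist p z ≤ dist p y + dist y e + dist e z := dist_triangle4 _ _ _ _
    _ < √n * s + t + s := by linarith [dist_le_of_mem_cube hs hp hy, mem_ball.mp hez]

/-- Cubes with disjoint interiors contain disjoint balls of half their side. -/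
theorem card_le_of_cubes_subset_ball (hn : 0 < n) {ι : Type*} {F : Finset ι}
    {a : ι → EuclideanSpace ℝ (Fin n)} {z : EuclideanSpace ℝ (Fin n)} {s ρ : ℝ}
    (hs : 0 < s) (hρ : 0 ≤ ρ)
    (hdisj : (F : Set ι).PairwiseDisjoint fun i => interior (cube (a i) s))
    (hsub : ∀ i ∈ F, cube (a i) s ⊆ ball z ρ) :
    (F.card : ℝ) ≤ (2 * ρ / s) ^ n := by
  have : Nontrivial (EuclideanSpace ℝ (Fin n)) :=
    Module.nontrivial_of_finrank_pos (by rwa [finrank_euclideanSpace_fin])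
  have := card_le_of_pairwiseDisjoint_ball (half_pos hs) hρ
    (hdisj.mono fun i => ball_subset_interior_cube (a i) s)
    (fun i hi => (ball_subset_interior_cube (a i) s).trans
      (interior_subset.trans (hsub i hi)))
  rwa [finrank_euclideanSpace_fin, div_div_eq_mul_div, mul_comm ρ] at this

theorem card_le_of_cubes_subset_biUnion_ball (hn : 0 < n) {ι : Type*} {F : Finset ι}
    {Q : ι → Set (EuclideanSpace ℝ (Fin n))} {a : ι → EuclideanSpace ℝ (Fin n)}
    {T : Finset (EuclideanSpace ℝ (Fin n))} {s ρ : ℝ} (hs : 0 < s) (hρ : 0 ≤ ρ)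
    (hQ : ∀ i ∈ F, Q i = cube (a i) s)
    (hdisj : (F : Set ι).PairwiseDisjoint fun i => interior (Q i))
    (hnear : ∀ i ∈ F, ∃ z ∈ T, Q i ⊆ ball z ρ) :
    (F.card : ℝ) ≤ (2 * ρ / s) ^ n * T.card := by
  classical
  choose! g hgT hg using hnear
  rw [Finset.card_eq_sum_card_fiberwise hgT, Nat.cast_sum, mul_comm, ← nsmul_eq_mul,
    ← Finset.sum_const]
  refine Finset.sum_le_sum fun z _ => card_le_of_cubes_subset_ball (a := a) (z := z) hn hs hρ ?_ ?_
  · refine (hdisj.subset (Finset.filter_subset _ F)).mono_on fun i hi => ?_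
    rw [hQ i (Finset.mem_filter.mp hi).1]
  · intro i hi
    obtain ⟨hiF, rfl⟩ := Finset.mem_filter.mp hi
    rw [← hQ i hiF]
    exact hg i hiF

end Cubes

theorem stmt_8_general (n : ℕ) (hn : 0 < n)
    (E : Set (EuclideanSpace ℝ (Fin n)))
    (ι : Type) (c : ι → EuclideanSpace ℝ (Fin n)) (l : ι → ℝ)
    (Q : ι → Set (EuclideanSpace ℝ (Fin n)))
    (hQ : ∀ i, Q i = {x | ∀ d, x d ∈ Set.Icc (c i d) (c i d + l i)})
    (hdisj : Pairwise fun i j => Disjoint (interior (Q i)) (interior (Q j)))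
    (hWhitney : ∀ i,
      Real.sqrt n * l i ≤ sInf ((fun y => Metric.infDist y E) '' Q i) ∧
      sInf ((fun y => Metric.infDist y E) '' Q i) ≤ 4 * Real.sqrt n * l i)
    (ς : ℝ) (hς : dimA E < ς) :
    ∃ C : ℝ, 0 < C ∧ ∀ x ∈ E, ∀ R : ℝ, 0 < R → ∀ k : ℤ, (2 : ℝ) ^ (-k) < R →
      {i | l i = 2 ^ (-k) ∧ Q i ⊆ ball x R}.Finite ∧
      ({i | l i = 2 ^ (-k) ∧ Q i ⊆ ball x R}.ncard : ℝ) ≤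
        C * R ^ ς * (2 : ℝ) ^ ((k : ℝ) * ς) := by
  obtain ⟨C, hC, hcov⟩ := exists_cover_of_dimA_lt hn hς
  refine ⟨(2 * (5 * √n + 2)) ^ n * C * (4 * √n + 2) ^ ς, by positivity,
    fun x hx R hR k hk => ?_⟩
  set r : ℝ := 2 ^ (-k)
  have hr : 0 < r := by positivity
  have hR' : R + (4 * √n + 1) * r ≤ (4 * √n + 2) * R := by nlinarith [Real.sqrt_nonneg n]
  obtain ⟨T, hT, hTcov⟩ := hcov x hx r ((4 * √n + 2) * R) hr (by nlinarith)
  have hnear : ∀ i ∈ {i | l i = r ∧ Q i ⊆ ball x R},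
      ∃ z ∈ T, Q i ⊆ ball z (√n * r + (4 * √n + 1) * r + r) := by
    rintro i ⟨hli, hQx⟩
    have hQi : Q i = cube (c i) r := hli ▸ hQ i
    have hdist := (hWhitney i).2.trans_lt (show 4 * √n * l i < (4 * √n + 1) * r by
      rw [hli]; linarith)
    rw [hQi] at hQx hdist ⊢
    exact exists_cube_subset_ball_of_sInf_infDist_lt hr.le hx hQx hdist
      (hTcov.trans' (Set.inter_subset_inter_right E (ball_subset_ball hR')))
  refine Set.finite_and_ncard_le_of_forall_finset_card_le fun F hF => ?_
  calc (F.card : ℝ)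
      ≤ (2 * (√n * r + (4 * √n + 1) * r + r) / r) ^ n * T.card :=
        card_le_of_cubes_subset_biUnion_ball hn hr (by positivity)
          (fun i hi => (hF hi).1 ▸ hQ i) (hdisj.set_pairwise _) fun i hi => hnear i (hF hi)
    _ ≤ (2 * (5 * √n + 2)) ^ n * (C * ((4 * √n + 2) * R / r) ^ ς) := by
        rw [show 2 * (√n * r + (4 * √n + 1) * r + r) / r = 2 * (5 * √n + 2) by
          field_simp; ring]
        gcongr
    _ = (2 * (5 * √n + 2)) ^ n * C * (4 * √n + 2) ^ ς * R ^ ς * 2 ^ ((k : ℝ) * ς) := by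
        rw [mul_div_assoc, Real.mul_rpow (by positivity) (by positivity),
          div_two_zpow_neg_rpow hR.le]
        ring

/-- Counting Whitney cubes of generation `k` contained in a ball `B(x,R)` centred at
`x ∈ E`: for every `ς > dim_A(E)` there is a constant `C` with
`W_k(B(x,R)) ≤ C R^ς 2^{kς}` whenever `2^{-k} < R`. -/
theorem stmt_8 (n : ℕ) (hn : 0 < n)
    (E : Set (EuclideanSpace ℝ (Fin n))) (hE : E.Nonempty) (hEc : IsClosed E)
    (ι : Type) (c : ι → EuclideanSpace ℝ (Fin n)) (l : ι → ℝ)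
    (Q : ι → Set (EuclideanSpace ℝ (Fin n)))
    (hQ : ∀ i, Q i = {x | ∀ d, x d ∈ Set.Icc (c i d) (c i d + l i)})
    (hdyadic : ∀ i, ∃ m : ℤ, l i = 2 ^ (-m))
    (hcover : (⋃ i, Q i) = Eᶜ)
    (hdisj : Pairwise fun i j => Disjoint (interior (Q i)) (interior (Q j)))
    (hWhitney : ∀ i,
      Real.sqrt n * l i ≤ sInf ((fun y => Metric.infDist y E) '' Q i) ∧
      sInf ((fun y => Metric.infDist y E) '' Q i) ≤ 4 * Real.sqrt n * l i)
    (hadj : ∀ i j, (Q i ∩ Q j).Nonempty → l i ≤ 4 * l j)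
    (ς : ℝ) (hς : dimA E < ς) :
    ∃ C : ℝ, 0 < C ∧ ∀ x ∈ E, ∀ R : ℝ, 0 < R → ∀ k : ℤ, (2 : ℝ) ^ (-k) < R →
      {i | l i = 2 ^ (-k) ∧ Q i ⊆ ball x R}.Finite ∧
      ({i | l i = 2 ^ (-k) ∧ Q i ⊆ ball x R}.ncard : ℝ) ≤
        C * R ^ ς * (2 : ℝ) ^ ((k : ℝ) * ς) :=
  stmt_8_general n hn E ι c l Q hQ hdisj hWhitney ς hς
end
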